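/- arXiv:1712.09053 — 4 statements merged into one kernel-verified Lean document; each statement's English description precedes it below -/
import Mathlib

section
/- Let (z_j)_{j∈J} be a (finite or countable) family in the open upper half-plane ℂ₊ = {z ∈ ℂ : Im z > 0} with |z_j| ≤ r₀ for all j and with ∑_j Im z_j < ∞. Then for every integer n ≥ 1 the family (Im(z_j^{n+1}))_j is absolutely summable and ∑_j |Im(z_j^{n+1})| ≤ (π/2)(n+1) r₀ⁿ ∑_j Im z_j. -/
/-! The bound holds term by term: from `Im (z ^ (k + 1)) = Im (z ^ k) Re z + Re (z ^ k) Im z`,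
induction gives `|Im (z ^ (n + 1))| ≤ (n + 1) ‖z‖ ^ n |Im z|`, and `1 ≤ π / 2`.
Summing over `j` gives the claim. -/

open Real

namespace Complex

theorem abs_im_pow_succ_le (z : ℂ) (n : ℕ) :
    |(z ^ (n + 1)).im| ≤ (n + 1) * ‖z‖ ^ n * |z.im| := by
  induction n with
  | zero => simp
  | succ n ih =>
    have hre : |(z ^ (n + 1)).re| ≤ ‖z‖ ^ (n + 1) :=
      (abs_re_le_norm _).trans_eq (norm_pow z (n + 1))
    calc |(z ^ (n + 1 + 1)).im|
        = |(z ^ (n + 1)).im * z.re + (z ^ (n + 1)).re * z.im| := by rw [pow_succ, mul_im, add_comm]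
      _ ≤ |(z ^ (n + 1)).im| * |z.re| + |(z ^ (n + 1)).re| * |z.im| := by
          rw [← abs_mul, ← abs_mul]; exact abs_add_le _ _
      _ ≤ ((n + 1) * ‖z‖ ^ n * |z.im|) * ‖z‖ + ‖z‖ ^ (n + 1) * |z.im| := by
          gcongr
          exact abs_re_le_norm z
      _ = (↑(n + 1) + 1) * ‖z‖ ^ (n + 1) * |z.im| := by push_cast; ring

theorem abs_im_pow_succ_le_of_norm_le {z : ℂ} {r : ℝ} (hz : ‖z‖ ≤ r) (n : ℕ) :
    |(z ^ (n + 1)).im| ≤ (n + 1) * r ^ n * |z.im| :=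
  (abs_im_pow_succ_le z n).trans (by gcongr)

end Complex

theorem stmt_12_general {J : Type*} (z : J → ℂ) (r₀ : ℝ)
    (hz : ∀ j, 0 < (z j).im) (hr : ∀ j, ‖z j‖ ≤ r₀)
    (hs : Summable fun j => (z j).im) (n : ℕ) :
    Summable (fun j => |((z j) ^ (n + 1)).im|) ∧
    ∑' j, |((z j) ^ (n + 1)).im| ≤ (π / 2) * (n + 1) * r₀ ^ n * ∑' j, (z j).im := by
  have hbound : ∀ j, |((z j) ^ (n + 1)).im| ≤ (π / 2) * (n + 1) * r₀ ^ n * (z j).im := by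
    intro j
    have hr₀ : 0 ≤ r₀ := (norm_nonneg _).trans (hr j)
    calc |((z j) ^ (n + 1)).im| ≤ (n + 1) * r₀ ^ n * (z j).im := by
          simpa only [abs_of_pos (hz j)] using Complex.abs_im_pow_succ_le_of_norm_le (hr j) n
      _ ≤ (π / 2) * (n + 1) * r₀ ^ n * (z j).im := by
          rw [mul_assoc (π / 2), mul_assoc (π / 2)]
          refine le_mul_of_one_le_left (by have := hz j; positivity) ?_
          linarith [pi_gt_three]
  have hdom : Summable fun j => (π / 2) * (n + 1) * r₀ ^ n * (z j).im := hs.mul_left _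
  have hsum : Summable fun j => |((z j) ^ (n + 1)).im| :=
    hdom.of_nonneg_of_le (fun _ => abs_nonneg _) hbound
  refine ⟨hsum, ?_⟩
  calc ∑' j, |((z j) ^ (n + 1)).im| ≤ ∑' j, (π / 2) * (n + 1) * r₀ ^ n * (z j).im :=
        hsum.tsum_le_tsum hbound hdom
    _ = (π / 2) * (n + 1) * r₀ ^ n * ∑' j, (z j).im := tsum_mul_left

/-- Let `(z_j)` be a countable family in the open upper half-plane
with `|z_j| ≤ r₀` and `∑ Im z_j < ∞`. Then for every `n ≥ 1` the family `Im(z_j^{n+1})`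
is absolutely summable and `∑_j |Im(z_j^{n+1})| ≤ (π/2)(n+1) r₀ⁿ ∑_j Im z_j`. -/
theorem stmt_12 {J : Type*} [Countable J] (z : J → ℂ) (r₀ : ℝ)
    (hz : ∀ j, 0 < (z j).im) (hr : ∀ j, ‖z j‖ ≤ r₀)
    (hs : Summable fun j => (z j).im) (n : ℕ) (hn : 1 ≤ n) :
    Summable (fun j => |((z j) ^ (n + 1)).im|) ∧
    ∑' j, |((z j) ^ (n + 1)).im| ≤ (π / 2) * (n + 1) * r₀ ^ n * ∑' j, (z j).im :=
  stmt_12_general z r₀ hz hr hs n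
end

section
/- Let (z_j)_{j∈J} be a countable family in ℂ₊ = {z ∈ ℂ : Im z > 0} with |z_j| ≤ r₀ for all j and ∑_j Im z_j < ∞. Then for every z ∈ ℂ with |z| > r₀ the infinite product B(z) = ∏_j (z − z_j)/(z − z̄_j) converges absolutely, the double series ∑_{n≥1} (2i/(n zⁿ)) ∑_j Im(z_jⁿ) converges absolutely, and B(z) = exp( − ∑_{n≥1} (2i/(n zⁿ)) ∑_j Im(z_jⁿ) ). -/
/-!
For `‖w‖ < ‖k‖` the factor `(k - w) / (k - w̄) = (1 - w / k) / (1 - w̄ / k)` is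
`exp (log (1 - w̄ / k) - log (1 - w / k))`, and the Taylor series of the two logarithms combine to
`∑ₙ (wⁿ⁺¹ - w̄ⁿ⁺¹) / ((n + 1) kⁿ⁺¹) = ∑ₙ 2 i Im (wⁿ⁺¹) / ((n + 1) kⁿ⁺¹)`.
Since `|Im (wⁿ⁺¹)| ≤ (n + 1) ‖w‖ⁿ |Im w|`, the double series over `n` and the zeros is dominated
by `2 / ‖k‖ (r₀ / ‖k‖)ⁿ |Im z_j|`, so the sums may be interchanged, and `exp` turns the summable
series of logarithms into the product.
-/

open Complex ComplexConjugate

theorem norm_pow_succ_sub_pow_succ_le {R : Type*} [NormedCommRing R] [NormOneClass R]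
    {x y : R} {r : ℝ} (hx : ‖x‖ ≤ r) (hy : ‖y‖ ≤ r) (m : ℕ) :
    ‖x ^ (m + 1) - y ^ (m + 1)‖ ≤ (m + 1) * r ^ m * ‖x - y‖ := by
  have hterm : ∀ i ∈ Finset.range (m + 1), ‖x ^ i * y ^ (m + 1 - 1 - i)‖ ≤ r ^ m := by
    intro i hi
    have him : i ≤ m := Nat.lt_succ_iff.mp (Finset.mem_range.mp hi)
    have hr : 0 ≤ r := (norm_nonneg x).trans hx
    calc ‖x ^ i * y ^ (m + 1 - 1 - i)‖ ≤ ‖x‖ ^ i * ‖y‖ ^ (m - i) :=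
          (norm_mul_le _ _).trans (mul_le_mul (norm_pow_le _ _) (norm_pow_le _ _)
            (norm_nonneg _) (by positivity))
      _ ≤ r ^ i * r ^ (m - i) := by gcongr
      _ = r ^ m := by rw [← pow_add, Nat.add_sub_cancel' him]
  calc ‖x ^ (m + 1) - y ^ (m + 1)‖
      = ‖(∑ i ∈ Finset.range (m + 1), x ^ i * y ^ (m + 1 - 1 - i)) * (x - y)‖ := by
        rw [geom_sum₂_mul]
    _ ≤ (∑ _i ∈ Finset.range (m + 1), r ^ m) * ‖x - y‖ :=
        (norm_mul_le _ _).trans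
          (by gcongr; exact (norm_sum_le _ _).trans (Finset.sum_le_sum hterm))
    _ = (m + 1) * r ^ m * ‖x - y‖ := by simp

theorem Complex.abs_im_pow_succ_le_s14 (w : ℂ) (m : ℕ) :
    |(w ^ (m + 1)).im| ≤ (m + 1) * ‖w‖ ^ m * |w.im| := by
  have h2 (u : ℂ) : ‖u - conj u‖ = 2 * |u.im| := by simp [sub_conj]
  have := norm_pow_succ_sub_pow_succ_le le_rfl (norm_conj w).le m
  rw [← map_pow, h2, h2] at this
  linarith

noncomputable def blaschkeFactor (k w : ℂ) : ℂ := (k - w) / (k - conj w)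

/-- In the notation `log B(k) = -∑ₙ i Bₙ / ((n + 1) kⁿ⁺¹)`, `Bₙ = 2 ∑ⱼ Im (z_jⁿ⁺¹)`, this is the
contribution of the zero `w` to `i Bₙ / ((n + 1) kⁿ⁺¹)`. -/
noncomputable def blaschkeTerm (k w : ℂ) (n : ℕ) : ℂ :=
  2 * I / (((n : ℂ) + 1) * k ^ (n + 1)) * (((w ^ (n + 1)).im : ℝ) : ℂ)

section BlaschkeFactor

variable {k w : ℂ}

theorem hasSum_blaschkeTerm (h : ‖w‖ < ‖k‖) :
    HasSum (blaschkeTerm k w) (log (1 - conj w / k) - log (1 - w / k)) := by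
  have hk : 0 < ‖k‖ := (norm_nonneg w).trans_lt h
  have hw : ‖w / k‖ < 1 := by rwa [norm_div, div_lt_one hk]
  have hw' : ‖conj w / k‖ < 1 := by rwa [norm_div, norm_conj, div_lt_one hk]
  have := (hasSum_taylorSeries_neg_log' hw).sub (hasSum_taylorSeries_neg_log' hw')
  rw [neg_sub_neg] at this
  refine this.congr_fun fun n => ?_
  have hk0 : k ≠ 0 := norm_pos_iff.mp hk
  have hn : (n : ℂ) + 1 ≠ 0 := by exact_mod_cast n.succ_ne_zero
  have him : 2 * I * (((w ^ (n + 1)).im : ℝ) : ℂ) = w ^ (n + 1) - conj w ^ (n + 1) := by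
    rw [← map_pow, sub_conj]
    push_cast
    ring
  simp only [blaschkeTerm, div_pow]
  field_simp
  linear_combination him

theorem blaschkeFactor_eq_exp_neg_tsum (h : ‖w‖ < ‖k‖) :
    blaschkeFactor k w = exp (-∑' n, blaschkeTerm k w n) := by
  have hk : 0 < ‖k‖ := (norm_nonneg w).trans_lt h
  have hk0 : k ≠ 0 := norm_pos_iff.mp hk
  have hne (u : ℂ) (hu : ‖u‖ < ‖k‖) : 1 - u / k ≠ 0 := by
    rw [sub_ne_zero, ne_eq, eq_div_iff hk0, one_mul]
    rintro rfl
    exact lt_irrefl _ hu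
  have h' : ‖conj w‖ < ‖k‖ := by rwa [norm_conj]
  rw [(hasSum_blaschkeTerm h).tsum_eq, neg_sub, Complex.exp_sub, exp_log (hne w h),
    exp_log (hne _ h'), one_sub_div hk0, one_sub_div hk0, div_div_div_cancel_right₀ hk0,
    blaschkeFactor]

theorem norm_blaschkeTerm_le (k w : ℂ) (n : ℕ) :
    ‖blaschkeTerm k w n‖ ≤ 2 / ‖k‖ * (‖w‖ / ‖k‖) ^ n * |w.im| := by
  have hn : (0 : ℝ) < n + 1 := n.cast_add_one_pos
  have hnorm : ‖blaschkeTerm k w n‖ = 2 / ((n + 1) * ‖k‖ ^ (n + 1)) * |(w ^ (n + 1)).im| := by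
    have hn' : ‖(n : ℂ) + 1‖ = n + 1 := by exact_mod_cast RCLike.norm_natCast (K := ℂ) (n + 1)
    simp [blaschkeTerm, hn']
  calc ‖blaschkeTerm k w n‖
      ≤ 2 / ((n + 1) * ‖k‖ ^ (n + 1)) * ((n + 1) * ‖w‖ ^ n * |w.im|) := by
        rw [hnorm]
        gcongr
        exact abs_im_pow_succ_le_s14 w n
    _ = 2 / ‖k‖ * (‖w‖ / ‖k‖) ^ n * |w.im| := by
        field_simp
        ring

theorem norm_blaschkeFactor_sub_one_le (h : ‖w‖ < ‖k‖) :
    ‖blaschkeFactor k w - 1‖ ≤ 2 * |w.im| / (‖k‖ - ‖w‖) := by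
  have hden : ‖k‖ - ‖w‖ ≤ ‖k - conj w‖ := by simpa using norm_sub_norm_le k (conj w)
  have hden0 : k - conj w ≠ 0 := norm_pos_iff.mp ((sub_pos.mpr h).trans_le hden)
  have hnum : ‖conj w - w‖ = 2 * |w.im| := by rw [← norm_neg, neg_sub, sub_conj]; simp
  calc ‖blaschkeFactor k w - 1‖ = 2 * |w.im| / ‖k - conj w‖ := by
        rw [blaschkeFactor, div_sub_one hden0, sub_sub_sub_cancel_left, norm_div, hnum]
    _ ≤ 2 * |w.im| / (‖k‖ - ‖w‖) := by gcongr

end BlaschkeFactor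

section BlaschkeProduct

variable {J : Type*} {z : J → ℂ} {r : ℝ} {k : ℂ}

theorem summable_norm_blaschkeFactor_sub_one (hr : ∀ j, ‖z j‖ ≤ r) (hk : r < ‖k‖)
    (hs : Summable fun j => (z j).im) :
    Summable fun j => ‖blaschkeFactor k (z j) - 1‖ := by
  refine (hs.abs.mul_left (2 / (‖k‖ - r))).of_nonneg_of_le (fun j => norm_nonneg _) fun j => ?_
  have hkj : ‖z j‖ < ‖k‖ := (hr j).trans_lt hk
  calc ‖blaschkeFactor k (z j) - 1‖ ≤ 2 * |(z j).im| / (‖k‖ - ‖z j‖) :=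
        norm_blaschkeFactor_sub_one_le hkj
    _ ≤ 2 * |(z j).im| / (‖k‖ - r) := by gcongr; exact hr j
    _ = 2 / (‖k‖ - r) * |(z j).im| := by ring

theorem summable_norm_blaschkeTerm (hr₀ : 0 ≤ r) (hr : ∀ j, ‖z j‖ ≤ r) (hk : r < ‖k‖)
    (hs : Summable fun j => (z j).im) :
    Summable fun p : ℕ × J => ‖blaschkeTerm k (z p.2) p.1‖ := by
  have hk₀ : 0 < ‖k‖ := hr₀.trans_lt hk
  have hgeom : Summable fun n : ℕ => 2 / ‖k‖ * (r / ‖k‖) ^ n :=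
    (summable_geometric_of_lt_one (by positivity) ((div_lt_one hk₀).mpr hk)).mul_left _
  refine (hgeom.mul_of_nonneg hs.abs (fun n => by positivity) fun j => abs_nonneg _)
    |>.of_nonneg_of_le (fun p => norm_nonneg _) fun ⟨n, j⟩ => ?_
  calc ‖blaschkeTerm k (z j) n‖ ≤ 2 / ‖k‖ * (‖z j‖ / ‖k‖) ^ n * |(z j).im| :=
        norm_blaschkeTerm_le k (z j) n
    _ ≤ 2 / ‖k‖ * (r / ‖k‖) ^ n * |(z j).im| := by gcongr; exact hr j

theorem hasProd_blaschkeFactor (hr₀ : 0 ≤ r) (hr : ∀ j, ‖z j‖ ≤ r) (hk : r < ‖k‖)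
    (hs : Summable fun j => (z j).im) :
    HasProd (fun j => blaschkeFactor k (z j)) (exp (-∑' n, ∑' j, blaschkeTerm k (z j) n)) := by
  have hsum : Summable fun p : J × ℕ => blaschkeTerm k (z p.1) p.2 :=
    (summable_norm_blaschkeTerm hr₀ hr hk hs).of_norm.prod_symm
  rw [Summable.tsum_comm (f := fun j n => blaschkeTerm k (z j) n) hsum]
  refine (hsum.prod.hasSum.neg.cexp).congr_fun fun j => ?_
  exact blaschkeFactor_eq_exp_neg_tsum ((hr j).trans_lt hk)

theorem tsum_blaschkeTerm (k : ℂ) (z : J → ℂ) (n : ℕ) :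
    ∑' j, blaschkeTerm k (z j) n =
      2 * I / (((n : ℂ) + 1) * k ^ (n + 1)) * (((∑' j, (z j ^ (n + 1)).im : ℝ)) : ℂ) := by
  simp only [blaschkeTerm, tsum_mul_left, ofReal_tsum]

end BlaschkeProduct

theorem stmt_14_general {J : Type*} (z : J → ℂ) (r₀ : ℝ)
    (hr : ∀ j, ‖z j‖ ≤ r₀)
    (hs : Summable fun j => (z j).im)
    (k : ℂ) (hk : r₀ < ‖k‖) :
    Multipliable (fun j => (k - z j) / (k - (starRingEnd ℂ) (z j))) ∧
    Summable (fun j => ‖(k - z j) / (k - (starRingEnd ℂ) (z j)) - 1‖) ∧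
    Summable (fun p : ℕ × J =>
      ‖(2 * I / (((p.1 : ℂ) + 1) * k ^ (p.1 + 1))) *
        (((z p.2 ^ (p.1 + 1)).im : ℝ) : ℂ)‖) ∧
    ∏' j, (k - z j) / (k - (starRingEnd ℂ) (z j)) =
      Complex.exp (- ∑' n : ℕ,
        (2 * I / (((n : ℂ) + 1) * k ^ (n + 1))) * (((∑' j, ((z j) ^ (n + 1)).im : ℝ)) : ℂ)) := by
  rcases isEmpty_or_nonempty J with _ | ⟨⟨j₀⟩⟩
  · simp
  have hr₀ : 0 ≤ r₀ := (norm_nonneg _).trans (hr j₀)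
  have hprod := hasProd_blaschkeFactor hr₀ hr hk hs
  refine ⟨hprod.multipliable, summable_norm_blaschkeFactor_sub_one hr hk hs,
    summable_norm_blaschkeTerm hr₀ hr hk hs, ?_⟩
  simp only [← tsum_blaschkeTerm]
  exact hprod.tprod_eq

/-- Let `(z_j)` be a countable family in the open upper half-plane with
`|z_j| ≤ r₀` and `∑ Im z_j < ∞`. Then for `|k| > r₀` the Blaschke product
`B(k) = ∏_j (k − z_j)/(k − z̄_j)` converges absolutely, the double series
`∑_{n≥1} (2i/(n kⁿ)) ∑_j Im(z_jⁿ)` converges absolutely, and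
`B(k) = exp(−∑_{n≥1} (2i/(n kⁿ)) ∑_j Im(z_jⁿ))`. -/
theorem stmt_14 {J : Type*} [Countable J] (z : J → ℂ) (r₀ : ℝ)
    (hz : ∀ j, 0 < (z j).im) (hr : ∀ j, ‖z j‖ ≤ r₀)
    (hs : Summable fun j => (z j).im)
    (k : ℂ) (hk : r₀ < ‖k‖) :
    Multipliable (fun j => (k - z j) / (k - (starRingEnd ℂ) (z j))) ∧
    Summable (fun j => ‖(k - z j) / (k - (starRingEnd ℂ) (z j)) - 1‖) ∧
    Summable (fun p : ℕ × J =>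
      ‖(2 * I / (((p.1 : ℂ) + 1) * k ^ (p.1 + 1))) *
        (((z p.2 ^ (p.1 + 1)).im : ℝ) : ℂ)‖) ∧
    ∏' j, (k - z j) / (k - (starRingEnd ℂ) (z j)) =
      Complex.exp (- ∑' n : ℕ,
        (2 * I / (((n : ℂ) + 1) * k ^ (n + 1))) * (((∑' j, ((z j) ^ (n + 1)).im : ℝ)) : ℂ)) :=
  stmt_14_general z r₀ hr hs k hk
end

section
/- Let h : ℝ → ℝ be locally integrable, let I₀ ∈ ℝ, and set h₀(t) = t·h(t) − I₀. Assume h₀(t) → 0 as t → ±∞ and ∫_ℝ |h₀(t)| (1 + |t|)^{−a} dt < ∞ for some a < 1. Then: (1) the principal value J₀ = lim_{s→∞} (1/π)∫_{−s}^{s} h(t) dt exists; (2) for every k ∈ ℂ with Im k > 0 the principal value M(k) = lim_{s→∞} (1/π)∫_{−s}^{s} h(t)/(k − t) dt exists, the integral M₀(k) = (1/π)∫_ℝ h₀(t)/(k − t) dt converges absolutely, and M(k) = (J₀ − i I₀ + M₀(k))/k; (3) M₀(iτ) → 0 as τ → +∞. -/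
/-!
Off `[-1, 1]` we have `h t = (I₀ + h₀ t) / t`, and `I₀ / t` is odd, so the symmetric integrals
of `h` are those of an integrable function; this gives `J₀`. Writing
`h t / (k - t) = (h t + h₀ t / (k - t) + I₀ / (k - t)) / k`, the principal value of
`∫ (k - t)⁻¹` is `log (k + s) - log (k - s) → -π i`. Finally `1 + |t| ≤ C ‖k - t‖` on the upper
half plane, with `C ≤ 3` for `k = i τ`, `τ ≥ 1`, so every `h₀`-integral is dominated by
`∫ |h₀ t| / (1 + |t|) < ∞`, and dominated convergence gives `M₀(i τ) → 0`.
-/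

open MeasureTheory Filter Real Complex Topology

lemma Function.Odd.intervalIntegral_neg_eq_zero {E : Type*} [NormedAddCommGroup E]
    [NormedSpace ℝ E] {f : ℝ → E} (hf : f.Odd) (s : ℝ) : ∫ t in -s..s, f t = 0 := by
  have h := intervalIntegral.integral_comp_neg (a := -s) (b := s) f
  simp only [hf _, intervalIntegral.integral_neg, neg_neg] at h
  have h2 : (2 : ℝ) • ∫ t in -s..s, f t = 0 := by
    rw [two_smul]; nth_rewrite 1 [← h]; exact neg_add_cancel _
  exact (smul_eq_zero.mp h2).resolve_left two_ne_zero

lemma integrableOn_smul_of_mul_norm_le {E : Type*} [NormedAddCommGroup E] [NormedSpace ℝ E]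
    {f : ℝ → ℝ} {w : ℝ → E} {s : Set ℝ} {C : ℝ}
    (hf : Integrable fun t => f t / (1 + |t|)) (hw : AEStronglyMeasurable w (volume.restrict s))
    (hs : MeasurableSet s) (hC : ∀ t ∈ s, (1 + |t|) * ‖w t‖ ≤ C) :
    IntegrableOn (fun t => f t • w t) s := by
  have hbdd : ∀ᵐ t ∂volume.restrict s, ‖(1 + |t|) • w t‖ ≤ C := by
    filter_upwards [ae_restrict_mem hs] with t ht
    rw [norm_smul, Real.norm_of_nonneg (by positivity)]
    exact hC t ht
  refine (hf.restrict.smul_bdd C ((by fun_prop : Continuous fun t : ℝ => 1 + |t|)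
    |>.aestronglyMeasurable.smul hw) hbdd).congr (Eventually.of_forall fun t => ?_)
  have : 1 + |t| ≠ 0 := by positivity
  simp only [Pi.smul_apply', smul_smul, div_mul_cancel₀ _ this]

lemma one_add_abs_le_mul_norm_sub {k : ℂ} (hk : 0 < k.im) (t : ℝ) :
    1 + |t| ≤ ((1 + ‖k‖) / k.im + 1) * ‖k - t‖ := by
  have him : k.im ≤ ‖k - t‖ := by
    simpa using (le_abs_self _).trans (abs_im_le_norm (k - t))
  have hre : |t| ≤ ‖k‖ + ‖k - t‖ := by
    simpa [norm_sub_rev] using norm_le_norm_add_norm_sub' (t : ℂ) k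
  have : 1 + ‖k‖ ≤ (1 + ‖k‖) / k.im * ‖k - t‖ := by
    rw [div_mul_eq_mul_div, le_div_iff₀ hk]
    exact mul_le_mul_of_nonneg_left him (by positivity)
  linarith

lemma sub_ofReal_ne_zero_of_im_pos {k : ℂ} (hk : 0 < k.im) (t : ℝ) : k - t ≠ 0 :=
  fun h => by simpa [sub_eq_zero.mp h] using hk.ne'

lemma continuous_inv_sub_ofReal {k : ℂ} (hk : 0 < k.im) : Continuous fun t : ℝ => (k - t)⁻¹ :=
  (continuous_const.sub continuous_ofReal).inv₀ (sub_ofReal_ne_zero_of_im_pos hk)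

lemma integrable_div_one_add_abs_of_rpow {f : ℝ → ℝ} {a : ℝ} (hf : AEStronglyMeasurable f)
    (ha : a ≤ 1) (hint : Integrable fun t => |f t| * (1 + |t|) ^ (-a)) :
    Integrable fun t => f t / (1 + |t|) := by
  refine hint.mono (hf.div₀ (by fun_prop : Continuous fun t : ℝ => 1 + |t|).aestronglyMeasurable)
    (Eventually.of_forall fun t => ?_)
  have h1 : (1 : ℝ) ≤ 1 + |t| := by linarith [abs_nonneg t]
  calc ‖f t / (1 + |t|)‖ = |f t| * (1 + |t|) ^ (-1 : ℝ) := by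
        rw [Real.rpow_neg_one, norm_div, Real.norm_eq_abs, Real.norm_of_nonneg (by positivity),
          div_eq_mul_inv]
    _ ≤ |f t| * (1 + |t|) ^ (-a) := by gcongr
    _ = ‖|f t| * (1 + |t|) ^ (-a)‖ := (Real.norm_of_nonneg (by positivity)).symm

lemma integrable_div_sub_of_im_pos {f : ℝ → ℝ} (hf : Integrable fun t => f t / (1 + |t|))
    {k : ℂ} (hk : 0 < k.im) : Integrable fun t : ℝ => (f t : ℂ) / (k - t) := by
  have hC (t : ℝ) (_ : t ∈ Set.univ) : (1 + |t|) * ‖(k - t)⁻¹‖ ≤ (1 + ‖k‖) / k.im + 1 := by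
    rw [norm_inv, ← div_eq_mul_inv,
      div_le_iff₀ (norm_pos_iff.mpr (sub_ofReal_ne_zero_of_im_pos hk t))]
    exact one_add_abs_le_mul_norm_sub hk t
  have := integrableOn_smul_of_mul_norm_le hf
    (continuous_inv_sub_ofReal hk).aestronglyMeasurable MeasurableSet.univ hC
  simpa [integrableOn_univ, Complex.real_smul, div_eq_mul_inv] using this

lemma exists_tendsto_intervalIntegral_neg_self {h h₀ : ℝ → ℝ} {I₀ : ℝ}
    (hloc : LocallyIntegrable h) (hh₀ : ∀ t, h₀ t = t * h t - I₀)
    (hw : Integrable fun t => h₀ t / (1 + |t|)) :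
    ∃ J : ℝ, Tendsto (fun s => ∫ t in -s..s, h t) atTop (𝓝 J) := by
  classical
  set S := Set.Icc (-1 : ℝ) 1
  -- `h - g` is the odd function `I₀ / t` off `S`.
  set g := S.piecewise h fun t => h₀ t / t
  have hout : IntegrableOn (fun t => h₀ t • t⁻¹) Sᶜ := by
    refine integrableOn_smul_of_mul_norm_le (C := 2) hw measurable_inv.aestronglyMeasurable
      measurableSet_Icc.compl fun t ht => ?_
    have h1 : 1 < |t| := by
      contrapose! ht
      exact not_not.mpr (abs_le.mp ht)
    rw [norm_inv, Real.norm_eq_abs, ← div_eq_mul_inv, div_le_iff₀ (by linarith)]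
    linarith
  have hg : Integrable g := Integrable.piecewise measurableSet_Icc
    (hloc.integrableOn_isCompact isCompact_Icc) (by simpa [div_eq_mul_inv] using hout)
  have hodd : Function.Odd fun t => h t - g t := fun t => by
    by_cases ht : t ∈ S
    · have : -t ∈ S := by simpa [S, and_comm, neg_le] using ht
      simp [g, ht, this]
    · have : -t ∉ S := by simpa [S, and_comm, neg_le] using ht
      have ht0 : t ≠ 0 := by rintro rfl; simp [S] at ht
      simp only [g, Set.piecewise_eq_of_notMem _ _ _ ht, Set.piecewise_eq_of_notMem _ _ _ this, hh₀]
      field_simp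
      ring
  refine ⟨∫ t, g t, (intervalIntegral_tendsto_integral hg tendsto_neg_atTop_atBot tendsto_id).congr
    fun s => ?_⟩
  have hh : IntervalIntegrable h volume (-s) s :=
    (hloc.integrableOn_isCompact isCompact_uIcc).intervalIntegrable
  have := hodd.intervalIntegral_neg_eq_zero s
  rw [intervalIntegral.integral_sub hh hg.intervalIntegrable, sub_eq_zero] at this
  exact this.symm

lemma intervalIntegral_inv_sub_eq_log_sub_log {k : ℂ} (hk : 0 < k.im) (s : ℝ) :
    ∫ t in -s..s, (k - t)⁻¹ = log (k + s) - log (k - s) := by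
  have hderiv (t : ℝ) : HasDerivAt (fun u : ℝ => -log (k - u)) (k - t)⁻¹ t := by
    have hslit : k - t ∈ slitPlane := Or.inr (by simpa using hk.ne')
    have := (((hasDerivAt_id (t : ℂ)).const_sub k).clog hslit).comp_ofReal.neg
    simp only [id, neg_div, neg_neg, one_div] at this
    exact this
  rw [intervalIntegral.integral_eq_sub_of_hasDerivAt (fun t _ => hderiv t)
    ((continuous_inv_sub_ofReal hk).intervalIntegrable _ _)]
  simp only [ofReal_neg, sub_neg_eq_add]
  ring

lemma tendsto_log_add_sub_log_sub {k : ℂ} (hk : 0 < k.im) :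
    Tendsto (fun s : ℝ => log (k + s) - log (k - s)) atTop (𝓝 (-(π * I))) := by
  have hks : Tendsto (fun s : ℝ => k / s) atTop (𝓝 0) := by
    simpa [div_eq_mul_inv] using
      ((continuous_ofReal.tendsto 0).comp tendsto_inv_atTop_zero).const_mul k
  have hplus : Tendsto (fun s : ℝ => log (k / s + 1)) atTop (𝓝 0) := by
    simpa [Function.comp_def] using
      (continuousAt_clog one_mem_slitPlane).tendsto.comp (by simpa using hks.add_const 1)
  -- `k / s - 1` tends to `-1` from the upper half plane, where `log` is continuous from above.
  have hminus : Tendsto (fun s : ℝ => log (k / s - 1)) atTop (𝓝 (π * I)) := by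
    have hwithin : Tendsto (fun s : ℝ => k / s - 1) atTop (𝓝[{z : ℂ | 0 ≤ z.im}] (-1)) := by
      refine tendsto_nhdsWithin_iff.mpr ⟨by simpa using hks.sub_const 1, ?_⟩
      filter_upwards [eventually_gt_atTop 0] with s hs
      simpa [div_ofReal_im] using div_nonneg hk.le hs.le
    simpa [Function.comp_def] using (tendsto_log_nhdsWithin_im_nonneg_of_re_neg_of_im_zero
      (z := -1) (by norm_num) (by norm_num)).comp hwithin
  refine Tendsto.congr' ?_ (by simpa using hplus.sub hminus)
  filter_upwards [eventually_gt_atTop 0] with s hs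
  have hs0 : (s : ℂ) ≠ 0 := ofReal_ne_zero.mpr hs.ne'
  have him : (k / s).im ≠ 0 := by simpa [div_ofReal_im] using (div_pos hk hs).ne'
  have hp : k / s + 1 ≠ 0 := fun h => him (by simpa using congrArg im h)
  have hm : k / s - 1 ≠ 0 := fun h => him (by simpa using congrArg im h)
  rw [show k + s = s * (k / s + 1) by field_simp, show k - s = s * (k / s - 1) by field_simp,
    log_ofReal_mul hs hp, log_ofReal_mul hs hm]
  ring

lemma tendsto_intervalIntegral_div_sub {h h₀ : ℝ → ℝ} {I₀ J : ℝ} (hloc : LocallyIntegrable h)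
    (hh₀ : ∀ t, h₀ t = t * h t - I₀) {k : ℂ} (hk : 0 < k.im)
    (hint : Integrable fun t : ℝ => (h₀ t : ℂ) / (k - t))
    (hJ : Tendsto (fun s => ∫ t in -s..s, h t) atTop (𝓝 J)) :
    Tendsto (fun s : ℝ => ∫ t in -s..s, (h t : ℂ) / (k - t)) atTop
      (𝓝 ((J - π * I * I₀ + ∫ t, (h₀ t : ℂ) / (k - t)) / k)) := by
  have hk0 : k ≠ 0 := fun h => by simp [h] at hk
  have hsplit (s : ℝ) : ∫ t in -s..s, (h t : ℂ) / (k - t) =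
      ((∫ t in -s..s, h t : ℝ) + (∫ t in -s..s, (h₀ t : ℂ) / (k - t)) +
        I₀ * ∫ t in -s..s, (k - t)⁻¹) / k := by
    have hh : IntervalIntegrable (fun t => (h t : ℂ)) volume (-s) s :=
      IntegrableOn.intervalIntegrable (hloc.integrableOn_isCompact isCompact_uIcc).ofReal
    have hinv : IntervalIntegrable (fun t : ℝ => (k - t)⁻¹) volume (-s) s :=
      (continuous_inv_sub_ofReal hk).intervalIntegrable _ _
    rw [← intervalIntegral.integral_ofReal, ← intervalIntegral.integral_const_mul,
      ← intervalIntegral.integral_add hh hint.intervalIntegrable,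
      ← intervalIntegral.integral_add (hh.add hint.intervalIntegrable) (hinv.const_mul _),
      ← intervalIntegral.integral_div]
    refine intervalIntegral.integral_congr fun t _ => ?_
    have := sub_ofReal_ne_zero_of_im_pos hk t
    simp only [hh₀]
    push_cast
    field_simp
    ring
  have hlim := (((continuous_ofReal.tendsto J).comp hJ).add
    (intervalIntegral_tendsto_integral hint tendsto_neg_atTop_atBot tendsto_id)).add
    (((tendsto_log_add_sub_log_sub hk).congr fun s =>
      (intervalIntegral_inv_sub_eq_log_sub_log hk s).symm).const_mul (I₀ : ℂ))
  convert hlim.div_const k using 2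
  · exact hsplit _
  · ring

lemma tendsto_integral_div_I_mul_sub_atTop {f : ℝ → ℝ}
    (hf : Integrable fun t => f t / (1 + |t|)) :
    Tendsto (fun τ : ℝ => ∫ t, (f t : ℂ) / (I * τ - t)) atTop (𝓝 0) := by
  have him (τ : ℝ) : (I * τ).im = τ := by simp
  have hnorm (τ t : ℝ) : τ ≤ ‖I * τ - t‖ := by
    have := abs_im_le_norm (I * τ - t)
    simp only [sub_im, him, ofReal_im, sub_zero] at this
    exact (le_abs_self τ).trans this
  rw [← integral_zero ℝ ℂ]
  refine tendsto_integral_filter_of_dominated_convergence (fun t => 3 * ‖f t / (1 + |t|)‖)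
    ?_ ?_ (hf.norm.const_mul 3)
    (Eventually.of_forall fun t => ?_)
  · filter_upwards [eventually_gt_atTop 0] with τ hτ
    exact (integrable_div_sub_of_im_pos hf ((him τ).symm ▸ hτ)).aestronglyMeasurable
  · filter_upwards [eventually_ge_atTop 1] with τ hτ
    refine Eventually.of_forall fun t => ?_
    have hτ0 : 0 < τ := by linarith
    have hpos : 0 < ‖I * τ - t‖ := hτ0.trans_le (hnorm τ t)
    have hC : (1 + ‖I * τ‖) / (I * τ).im + 1 ≤ 3 := by
      rw [him, norm_mul, norm_I, norm_real, Real.norm_of_nonneg hτ0.le, one_mul,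
        ← le_sub_iff_add_le, div_le_iff₀ hτ0]
      linarith
    have hbound : 1 + |t| ≤ 3 * ‖I * τ - t‖ :=
      (one_add_abs_le_mul_norm_sub ((him τ).symm ▸ hτ0) t).trans
        (mul_le_mul_of_nonneg_right hC (norm_nonneg _))
    rw [norm_div, norm_real, norm_div, Real.norm_of_nonneg (by positivity : 0 ≤ 1 + |t|),
      div_le_iff₀ hpos]
    calc ‖f t‖ = ‖f t‖ / (1 + |t|) * (1 + |t|) := by field_simp
      _ ≤ ‖f t‖ / (1 + |t|) * (3 * ‖I * τ - t‖) := by gcongr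
      _ = 3 * (‖f t‖ / (1 + |t|)) * ‖I * τ - t‖ := by ring
  · refine squeeze_zero_norm' ?_ (by simpa using tendsto_inv_atTop_zero.const_mul ‖f t‖)
    filter_upwards [eventually_gt_atTop 0] with τ hτ
    rw [norm_div, norm_real, div_eq_mul_inv]
    exact mul_le_mul_of_nonneg_left (inv_anti₀ hτ (hnorm τ t)) (norm_nonneg _)

theorem stmt_18_general (h : ℝ → ℝ) (hloc : LocallyIntegrable h volume) (I₀ : ℝ)
    (h₀ : ℝ → ℝ) (hh₀ : ∀ t : ℝ, h₀ t = t * h t - I₀)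
    (a : ℝ) (ha : a < 1)
    (hint : Integrable (fun t : ℝ => |h₀ t| * (1 + |t|) ^ (-a))) :
    ∃ J₀ : ℝ,
      Tendsto (fun s : ℝ => (1 / π) * ∫ t in (-s)..s, h t) atTop (nhds J₀) ∧
      (∀ k : ℂ, 0 < k.im →
        Integrable (fun t : ℝ => ((h₀ t : ℝ) : ℂ) / (k - (t : ℂ))) ∧
        Tendsto (fun s : ℝ => (1 / (π : ℂ)) * ∫ t in (-s)..s, ((h t : ℝ) : ℂ) / (k - (t : ℂ)))
          atTop
          (nhds (((J₀ : ℂ) - I * (I₀ : ℂ) +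
            (1 / (π : ℂ)) * ∫ t : ℝ, ((h₀ t : ℝ) : ℂ) / (k - (t : ℂ))) / k))) ∧
      Tendsto (fun τ : ℝ =>
          (1 / (π : ℂ)) * ∫ t : ℝ, ((h₀ t : ℝ) : ℂ) / (I * (τ : ℂ) - (t : ℂ)))
        atTop (nhds 0) := by
  have hm : AEStronglyMeasurable h₀ := by
    rw [funext hh₀]
    exact (aestronglyMeasurable_id.mul hloc.aestronglyMeasurable).sub aestronglyMeasurable_const
  have hw := integrable_div_one_add_abs_of_rpow hm ha.le hint
  obtain ⟨J, hJ⟩ := exists_tendsto_intervalIntegral_neg_self hloc hh₀ hw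
  refine ⟨J / π, by simpa [div_eq_inv_mul] using hJ.const_mul (1 / π),
    fun k hk => ⟨integrable_div_sub_of_im_pos hw hk, ?_⟩,
    by simpa using (tendsto_integral_div_I_mul_sub_atTop hw).const_mul (1 / (π : ℂ))⟩
  convert (tendsto_intervalIntegral_div_sub hloc hh₀ hk (integrable_div_sub_of_im_pos hw hk)
    hJ).const_mul (1 / (π : ℂ)) using 2
  push_cast
  field_simp

/-- Let `h : ℝ → ℝ` be locally integrable, `I₀ ∈ ℝ`, and
`h₀(t) = t·h(t) − I₀`. Assume `h₀(t) → 0` as `t → ±∞` and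
`∫ |h₀(t)|(1+|t|)^{−a} dt < ∞` for some `a < 1`. Then: (1) the principal value
`J₀ = lim_{s→∞} (1/π)∫_{−s}^s h` exists; (2) for each `k` with `Im k > 0` the
principal value `M(k) = lim_{s→∞} (1/π)∫_{−s}^s h(t)/(k−t) dt` exists, the integral
`M₀(k) = (1/π)∫ h₀(t)/(k−t) dt` converges absolutely, and
`M(k) = (J₀ − iI₀ + M₀(k))/k`; (3) `M₀(iτ) → 0` as `τ → +∞`. -/
theorem stmt_18 (h : ℝ → ℝ) (hloc : LocallyIntegrable h volume) (I₀ : ℝ)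
    (h₀ : ℝ → ℝ) (hh₀ : ∀ t : ℝ, h₀ t = t * h t - I₀)
    (htop : Tendsto h₀ atTop (nhds 0)) (hbot : Tendsto h₀ atBot (nhds 0))
    (a : ℝ) (ha : a < 1)
    (hint : Integrable (fun t : ℝ => |h₀ t| * (1 + |t|) ^ (-a))) :
    ∃ J₀ : ℝ,
      Tendsto (fun s : ℝ => (1 / π) * ∫ t in (-s)..s, h t) atTop (nhds J₀) ∧
      (∀ k : ℂ, 0 < k.im →
        Integrable (fun t : ℝ => ((h₀ t : ℝ) : ℂ) / (k - (t : ℂ))) ∧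
        Tendsto (fun s : ℝ => (1 / (π : ℂ)) * ∫ t in (-s)..s, ((h t : ℝ) : ℂ) / (k - (t : ℂ)))
          atTop
          (nhds (((J₀ : ℂ) - I * (I₀ : ℂ) +
            (1 / (π : ℂ)) * ∫ t : ℝ, ((h₀ t : ℝ) : ℂ) / (k - (t : ℂ))) / k))) ∧
      Tendsto (fun τ : ℝ =>
          (1 / (π : ℂ)) * ∫ t : ℝ, ((h₀ t : ℝ) : ℂ) / (I * (τ : ℂ) - (t : ℂ)))
        atTop (nhds 0) :=
  stmt_18_general h hloc I₀ h₀ hh₀ a ha hint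
end

section
/- Let m ≥ 0 be an integer, let h : ℝ → ℝ be locally integrable and let I₀, I₁, …, I_m ∈ ℝ. For 0 ≤ j ≤ m set P_j(t) = ∑_{i=0}^{j} I_i/t^{i+1} and h_j(t) = t^{j+1}(h(t) − P_j(t)), and set h_{−1} = h. Assume h_m(t) → 0 as t → ±∞ and ∫_ℝ |h_m(t)| (1 + |t|)^{−a} dt < ∞ for some a < 1. Then: (1) for each j = 0, 1, …, m the principal value 𝒥_j = lim_{s→∞} (1/π)∫_{−s}^{s} h_{j−1}(t) dt exists; (2) for every k ∈ ℂ with Im k > 0, the principal value M(k) = lim_{s→∞} (1/π)∫_{−s}^{s} h(t)/(k − t) dt exists and M(k) = ∑_{j=0}^{m} (𝒥_j − i I_j)/k^{j+1} + M_m(k)/k^{m+1}, where M_m(k) = (1/π)∫_ℝ h_m(t)/(k − t) dt converges absolutely; (3) M_m(iτ) → 0 as τ → +∞. -/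
/-!
Write `f_j = h_{j-1}`, so that `f_{j+1}(t) = t f_j(t) - I_j`. Since `h_m` is integrable against
`(1 + |t|)⁻¹`, a downward induction shows that every `f_{j+1}(t)/t = f_j(t) - I_j/t` is integrable
on `|t| ≥ 1`; as `1/t` is odd, its symmetric integrals vanish, so the principal value of `f_j`
exists. Iterating `f_j/(k - t) = (f_j + (f_{j+1} + I_j)/(k - t))/k` writes `h/(k - t)` as a finite
sum, and the symmetric integrals of `(k - t)⁻¹` tend to `-πi`, which produces the terms `-i I_j`.
Finally `M_m(iτ) → 0` by dominated convergence.
-/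

open MeasureTheory Filter Real Topology

theorem tendsto_intervalIntegral_inv_sub_ofReal {k : ℂ} (hk : 0 < k.im) :
    Tendsto (fun s : ℝ => ∫ t in (-s)..s, (k - t)⁻¹) atTop (𝓝 (-π * Complex.I)) := by
  have hslit (t : ℝ) : k - t ∈ Complex.slitPlane :=
    Complex.mem_slitPlane_iff.2 (Or.inr (by simpa using hk.ne'))
  have hcont : Continuous fun t : ℝ => (k - t)⁻¹ :=
    (continuous_const.sub Complex.continuous_ofReal).inv₀ fun t =>
      Complex.slitPlane_ne_zero (hslit t)
  have hval (s : ℝ) :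
      ∫ t in (-s)..s, (k - t)⁻¹ = Complex.log (k + s) - Complex.log (k - s) := by
    have hderiv (t : ℝ) : HasDerivAt (fun u : ℝ => -Complex.log (k - u)) (k - t)⁻¹ t :=
      (((hasDerivAt_id (t : ℂ)).const_sub k).clog (hslit t)).neg.comp_ofReal.congr_deriv
        (by simp only [id, neg_div, neg_neg, one_div])
    rw [intervalIntegral.integral_eq_sub_of_hasDerivAt (fun t _ => hderiv t)
      (hcont.intervalIntegrable _ _)]
    simp only [Complex.ofReal_neg, sub_neg_eq_add]
    ring
  have hks : Tendsto (fun s : ℝ => k / s) atTop (𝓝 0) := by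
    simpa [div_eq_mul_inv] using
      ((Complex.continuous_ofReal.tendsto 0).comp tendsto_inv_atTop_zero).const_mul k
  -- `k + s = s (1 + k/s)` and `k - s = s (k/s - 1)`, where `k/s - 1 → -1` from the upper
  -- half-plane, on which `log` is continuous at `-1` with value `π i`.
  have hrescale : ∀ᶠ s : ℝ in atTop, Complex.log (1 + k / s) - Complex.log (k / s - 1) =
      ∫ t in (-s)..s, (k - t)⁻¹ := by
    filter_upwards [eventually_gt_atTop 0] with s hs
    have hs' : (s : ℂ) ≠ 0 := by exact_mod_cast hs.ne'
    have him : (k / s).im ≠ 0 := by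
      rw [Complex.div_ofReal_im]; exact (div_pos hk hs).ne'
    rw [hval, show k + s = s * (1 + k / s) by field_simp; ring,
      show k - s = s * (k / s - 1) by field_simp, Complex.log_ofReal_mul hs,
      Complex.log_ofReal_mul hs]
    · ring
    · exact Complex.slitPlane_ne_zero (Complex.mem_slitPlane_iff.2 (Or.inr (by simpa using him)))
    · exact Complex.slitPlane_ne_zero (Complex.mem_slitPlane_iff.2 (Or.inr (by simpa using him)))
  have hplus : Tendsto (fun s : ℝ => Complex.log (1 + k / s)) atTop (𝓝 0) := by
    simpa [Function.comp_def] using (continuousAt_clog (x := 1) (by simp)).tendsto.comp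
      (by simpa using tendsto_const_nhds.add hks)
  have hminus : Tendsto (fun s : ℝ => Complex.log (k / s - 1)) atTop (𝓝 (π * Complex.I)) := by
    have hw : Tendsto (fun s : ℝ => k / s - 1) atTop (𝓝[{z | 0 ≤ z.im}] (-1)) := by
      refine tendsto_nhdsWithin_iff.2 ⟨by simpa using hks.sub_const 1, ?_⟩
      filter_upwards [eventually_gt_atTop 0] with s hs
      simpa [Complex.div_ofReal_im] using (div_pos hk hs).le
    simpa [Complex.log_neg_one, Function.comp_def] using
      (Complex.continuousWithinAt_log_of_re_neg_of_im_zero (by simp) (by simp)).tendsto.comp hw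
  simpa using (hplus.sub hminus).congr' hrescale

theorem inv_abs_le_two_mul_inv_one_add_abs {t : ℝ} (ht : 1 ≤ |t|) :
    |t|⁻¹ ≤ 2 * (1 + |t|)⁻¹ := by
  rw [← one_div, ← div_eq_mul_inv, div_le_div_iff₀ (by linarith) (by positivity)]
  linarith

theorem im_le_norm_sub_ofReal (k : ℂ) (t : ℝ) : k.im ≤ ‖k - t‖ :=
  (le_abs_self _).trans (by simpa using Complex.abs_im_le_norm (k - t))

theorem one_add_abs_le_mul_norm_sub_ofReal {k : ℂ} (hk : 0 < k.im) (t : ℝ) :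
    1 + |t| ≤ ((1 + |k.re|) / k.im + 1) * ‖k - t‖ := by
  have hre : |t| ≤ |k.re| + ‖k - t‖ := by
    have := Complex.abs_re_le_norm (k - t)
    rw [Complex.sub_re, Complex.ofReal_re] at this
    linarith [abs_sub_abs_le_abs_sub t k.re, abs_sub_comm t k.re]
  have him : 1 + |k.re| ≤ (1 + |k.re|) / k.im * ‖k - t‖ := by
    rw [div_mul_eq_mul_div, le_div_iff₀ hk]
    exact mul_le_mul_of_nonneg_left (im_le_norm_sub_ofReal k t) (by positivity)
  linarith

theorem norm_inv_sub_ofReal_le {k : ℂ} (hk : 0 < k.im) (t : ℝ) :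
    ‖(k - t)⁻¹‖ ≤ ((1 + |k.re|) / k.im + 1) * (1 + |t|)⁻¹ := by
  have hpos : 0 < ‖k - t‖ := hk.trans_le (im_le_norm_sub_ofReal k t)
  rw [norm_inv, ← div_eq_mul_inv, le_div_iff₀ (by positivity), ← div_eq_inv_mul,
    div_le_iff₀ hpos]
  exact one_add_abs_le_mul_norm_sub_ofReal hk t

section WeightedIntegrable

variable {f : ℝ → ℝ}

theorem integrable_mul_inv_one_add_abs {μ : Measure ℝ} (hf : AEStronglyMeasurable f μ) {a : ℝ}
    (ha : a ≤ 1) (hint : Integrable (fun t => |f t| * (1 + |t|) ^ (-a)) μ) :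
    Integrable (fun t => f t * (1 + |t|)⁻¹) μ := by
  refine hint.mono' (hf.mul (by fun_prop)) (ae_of_all _ fun t => ?_)
  rw [norm_mul, Real.norm_eq_abs, norm_inv, Real.norm_of_nonneg (by positivity),
    ← rpow_neg_one]
  gcongr
  exact le_add_of_nonneg_right (abs_nonneg t)

theorem integrableOn_div_of_integrable_mul_inv_one_add_abs (hf : AEStronglyMeasurable f)
    (hw : Integrable fun t => f t * (1 + |t|)⁻¹) :
    IntegrableOn (fun t => f t / t) {t | 1 ≤ |t|} := by
  refine (hw.norm.const_mul 2).integrableOn.mono'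
    (hf.aemeasurable.div measurable_id.aemeasurable).aestronglyMeasurable.restrict
    (ae_restrict_of_forall_mem (measurableSet_le measurable_const continuous_abs.measurable)
      fun t (ht : 1 ≤ |t|) => ?_)
  calc ‖f t / t‖ = |f t| * |t|⁻¹ := by rw [Real.norm_eq_abs, abs_div, div_eq_mul_inv]
    _ ≤ |f t| * (2 * (1 + |t|)⁻¹) := by gcongr; exact inv_abs_le_two_mul_inv_one_add_abs ht
    _ = 2 * ‖f t * (1 + |t|)⁻¹‖ := by
      rw [Real.norm_eq_abs, abs_mul, abs_inv, abs_of_pos (by positivity : (0 : ℝ) < 1 + |t|)]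
      ring

theorem integrable_ofReal_div_sub (hf : AEStronglyMeasurable f)
    (hw : Integrable fun t => f t * (1 + |t|)⁻¹) {k : ℂ} (hk : 0 < k.im) :
    Integrable fun t : ℝ => (f t : ℂ) / (k - t) := by
  have hne (t : ℝ) : k - t ≠ 0 := norm_pos_iff.1 (hk.trans_le (im_le_norm_sub_ofReal k t))
  refine (hw.norm.const_mul ((1 + |k.re|) / k.im + 1)).mono'
    ((Complex.measurable_ofReal.comp_aemeasurable hf.aemeasurable).div
      (by fun_prop : Measurable fun t : ℝ => k - t).aemeasurable).aestronglyMeasurable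
    (ae_of_all _ fun t => ?_)
  calc ‖(f t : ℂ) / (k - t)‖ = |f t| * ‖(k - t)⁻¹‖ := by
        rw [div_eq_mul_inv, norm_mul, Complex.norm_real, Real.norm_eq_abs]
    _ ≤ |f t| * (((1 + |k.re|) / k.im + 1) * (1 + |t|)⁻¹) := by
        gcongr; exact norm_inv_sub_ofReal_le hk t
    _ = ((1 + |k.re|) / k.im + 1) * ‖f t * (1 + |t|)⁻¹‖ := by
      rw [Real.norm_eq_abs, abs_mul, abs_inv, abs_of_pos (by positivity : (0 : ℝ) < 1 + |t|)]
      ring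

theorem tendsto_integral_ofReal_div_I_mul_sub (hf : AEStronglyMeasurable f)
    (hw : Integrable fun t => f t * (1 + |t|)⁻¹) :
    Tendsto (fun τ : ℝ => ∫ t, (f t : ℂ) / (Complex.I * τ - t)) atTop (𝓝 0) := by
  have him (τ : ℝ) : (Complex.I * τ).im = τ := by simp
  rw [← integral_zero ℝ ℂ]
  refine tendsto_integral_filter_of_dominated_convergence (fun t => 2 * ‖f t * (1 + |t|)⁻¹‖)
    ?_ ?_ (hw.norm.const_mul 2) (ae_of_all _ fun t => ?_)
  · filter_upwards [eventually_gt_atTop 0] with τ hτ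
    exact (integrable_ofReal_div_sub hf hw ((him τ).symm ▸ hτ)).aestronglyMeasurable
  · filter_upwards [eventually_ge_atTop 1] with τ hτ
    refine ae_of_all _ fun t => ?_
    have hbound := norm_inv_sub_ofReal_le ((him τ).symm ▸ zero_lt_one.trans_le hτ) t
    have hC : (1 + |(Complex.I * τ).re|) / (Complex.I * τ).im + 1 ≤ 2 := by
      simpa [him, one_add_one_eq_two] using add_le_add_left (inv_le_one_of_one_le₀ hτ) 1
    calc ‖(f t : ℂ) / (Complex.I * τ - t)‖ = |f t| * ‖(Complex.I * τ - t)⁻¹‖ := by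
          rw [div_eq_mul_inv, norm_mul, Complex.norm_real, Real.norm_eq_abs]
      _ ≤ |f t| * (2 * (1 + |t|)⁻¹) := by
          gcongr; exact hbound.trans (by gcongr)
      _ = 2 * ‖f t * (1 + |t|)⁻¹‖ := by
        rw [Real.norm_eq_abs, abs_mul, abs_inv, abs_of_pos (by positivity : (0 : ℝ) < 1 + |t|)]
        ring
  · refine squeeze_zero_norm' (a := fun τ : ℝ => |f t| * τ⁻¹) ?_
      (by simpa using tendsto_inv_atTop_zero.const_mul |f t|)
    filter_upwards [eventually_gt_atTop 0] with τ hτ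
    rw [div_eq_mul_inv, norm_mul, Complex.norm_real, Real.norm_eq_abs, norm_inv]
    gcongr
    simpa [him] using im_le_norm_sub_ofReal (Complex.I * τ) t

end WeightedIntegrable

section Recursion

variable {f g : ℝ → ℝ} {c : ℝ}

theorem integrableOn_div_of_eq_mul_sub (hrec : ∀ t ≠ 0, g t = t * f t - c)
    (hg : IntegrableOn (fun t => g t / t) {t | 1 ≤ |t|}) :
    IntegrableOn (fun t => f t / t) {t | 1 ≤ |t|} := by
  have hS : MeasurableSet {t : ℝ | 1 ≤ |t|} :=
    measurableSet_le measurable_const continuous_abs.measurable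
  have hsq : IntegrableOn (fun t : ℝ => c / t ^ 2) {t | 1 ≤ |t|} := by
    refine (integrable_inv_one_add_sq.const_mul (2 * |c|)).integrableOn.mono'
      (by fun_prop : Measurable fun t : ℝ => c / t ^ 2).aestronglyMeasurable
      (ae_restrict_of_forall_mem hS fun t (ht : 1 ≤ |t|) => ?_)
    have ht2 : 1 ≤ t ^ 2 := by nlinarith [sq_abs t]
    rw [Real.norm_eq_abs, abs_div, abs_of_pos (by positivity : (0 : ℝ) < t ^ 2),
      ← div_eq_mul_inv, div_le_div_iff₀ (by positivity) (by positivity)]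
    nlinarith [abs_nonneg c]
  have hginv : IntegrableOn (fun t => g t / t * t⁻¹) {t | 1 ≤ |t|} :=
    hg.mul_bdd (by fun_prop) (ae_restrict_of_forall_mem hS fun t (ht : 1 ≤ |t|) => by
      rw [norm_inv, Real.norm_eq_abs]; exact inv_le_one_of_one_le₀ ht)
  refine (hginv.add hsq).congr_fun (fun t (ht : 1 ≤ |t|) => ?_) hS
  have ht0 : t ≠ 0 := by rintro rfl; norm_num at ht
  simp only [Pi.add_apply]
  rw [hrec t ht0]
  field_simp
  ring

theorem exists_tendsto_intervalIntegral_neg_self_s19 (hf : LocallyIntegrable f)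
    (hrec : ∀ t ≠ 0, g t = t * f t - c) (hg : IntegrableOn (fun t => g t / t) {t | 1 ≤ |t|}) :
    ∃ J, Tendsto (fun s => ∫ t in (-s)..s, f t) atTop (𝓝 J) := by
  set S := {t : ℝ | 1 ≤ |t|}
  have hS : MeasurableSet S := measurableSet_le measurable_const continuous_abs.measurable
  have hS0 {t : ℝ} (ht : t ∈ S) : t ≠ 0 := by rintro rfl; norm_num [S] at ht
  -- `f - u` is integrable, and the symmetric integrals of the odd function `u` vanish.
  set u := S.indicator fun t => c / t
  have hu_mem {t : ℝ} (ht : t ∈ S) : u t = c / t := Set.indicator_of_mem ht _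
  have hu_notMem {t : ℝ} (ht : t ∉ S) : u t = 0 := Set.indicator_of_notMem ht _
  have hu_odd (t : ℝ) : u (-t) = -u t := by
    by_cases ht : t ∈ S
    · rw [hu_mem ht, hu_mem (show 1 ≤ |-t| by rwa [abs_neg]), div_neg]
    · rw [hu_notMem ht, hu_notMem (show ¬1 ≤ |-t| by rwa [abs_neg]), neg_zero]
  have hu_int (s : ℝ) : IntervalIntegrable u volume (-s) s := by
    refine (intervalIntegrable_const (c := c)).mono_fun
      ((by fun_prop : Measurable fun t : ℝ => c / t).indicator hS).aestronglyMeasurable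
      (ae_of_all _ fun t => ?_)
    show ‖u t‖ ≤ ‖c‖
    by_cases ht : t ∈ S
    · rw [hu_mem ht, norm_div, Real.norm_eq_abs]
      exact div_le_self (abs_nonneg c) ht
    · simp [hu_notMem ht]
  have hint : Integrable fun t => f t - u t := by
    rw [← integrableOn_univ, ← Set.union_compl_self S]
    refine (hg.congr_fun (fun t ht => ?_) hS).union
      (((hf.integrableOn_isCompact (isCompact_Icc (a := -1) (b := 1))).mono_set
        fun t ht => ?_).congr_fun (fun t ht => ?_) hS.compl)
    · rw [hrec t (hS0 ht), hu_mem ht]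
      field_simp [hS0 ht]
    · exact abs_le.mp (not_le.mp (Set.notMem_of_mem_compl ht)).le
    · rw [hu_notMem ht, sub_zero]
  refine ⟨∫ t, f t - u t, (intervalIntegral_tendsto_integral hint tendsto_neg_atTop_atBot
    tendsto_id).congr fun s => ?_⟩
  have hu0 : ∫ t in (-s)..s, u t = 0 := by
    have := intervalIntegral.integral_comp_neg (a := -s) (b := s) u
    simp only [hu_odd, intervalIntegral.integral_neg, neg_neg] at this
    linarith
  rw [id, intervalIntegral.integral_sub
    (hf.integrableOn_isCompact isCompact_uIcc).intervalIntegrable (hu_int s), hu0, sub_zero]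

end Recursion

noncomputable def expansionRemainder (h : ℝ → ℝ) (I : ℕ → ℝ) (j : ℕ) (t : ℝ) : ℝ :=
  t ^ j * (h t - ∑ i ∈ Finset.range j, I i / t ^ (i + 1))

namespace expansionRemainder

variable {h : ℝ → ℝ} {I : ℕ → ℝ}

@[simp]
theorem zero : expansionRemainder h I 0 = h := by
  ext t; simp [expansionRemainder]

theorem succ (j : ℕ) {t : ℝ} (ht : t ≠ 0) :
    expansionRemainder h I (j + 1) t = t * expansionRemainder h I j t - I j := by
  simp only [expansionRemainder, Finset.sum_range_succ]
  field_simp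
  ring

theorem locallyIntegrable (hh : LocallyIntegrable h) (j : ℕ) :
    LocallyIntegrable (expansionRemainder h I j) := by
  induction j with
  | zero => simpa using hh
  | succ j ih =>
    refine ((ih.continuous_mul continuous_id).sub (locallyIntegrable_const (I j))).congr ?_
    filter_upwards [Measure.ae_ne volume 0] with t ht
    exact (succ j ht).symm

theorem integrableOn_div (n : ℕ)
    (hn : IntegrableOn (fun t => expansionRemainder h I n t / t) {t | 1 ≤ |t|}) {j : ℕ}
    (hj : j ≤ n) : IntegrableOn (fun t => expansionRemainder h I j t / t) {t | 1 ≤ |t|} := by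
  induction hj using Nat.decreasingInduction with
  | self => exact hn
  | of_succ j _ ih => exact integrableOn_div_of_eq_mul_sub (fun t ht => succ j ht) ih

theorem ofReal_div_sub_eq {k : ℂ} (hk : k ≠ 0) {t : ℝ} (ht : t ≠ 0) (hkt : k - t ≠ 0) (n : ℕ) :
    (h t : ℂ) / (k - t) = ∑ j ∈ Finset.range n,
        ((expansionRemainder h I j t : ℂ) + I j * (k - t)⁻¹) / k ^ (j + 1)
      + (expansionRemainder h I n t : ℂ) / (k - t) / k ^ n := by
  induction n with
  | zero => simp
  | succ n ih =>
    rw [ih, Finset.sum_range_succ, add_assoc, succ n ht]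
    congr 1
    push_cast
    field_simp
    ring

theorem tendsto_intervalIntegral_ofReal_div_sub (hh : LocallyIntegrable h) {k : ℂ}
    (hk : 0 < k.im) {n : ℕ} {J : ℕ → ℝ}
    (hJ : ∀ j < n, Tendsto (fun s => ∫ t in (-s)..s, expansionRemainder h I j t) atTop (𝓝 (J j)))
    (hn : Integrable fun t : ℝ => (expansionRemainder h I n t : ℂ) / (k - t)) :
    Tendsto (fun s : ℝ => ∫ t in (-s)..s, (h t : ℂ) / (k - t)) atTop
      (𝓝 (∑ j ∈ Finset.range n, ((J j : ℂ) - π * Complex.I * I j) / k ^ (j + 1)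
        + (∫ t, (expansionRemainder h I n t : ℂ) / (k - t)) / k ^ n)) := by
  have hk0 : k ≠ 0 := by rintro rfl; simp at hk
  have hkt (t : ℝ) : k - t ≠ 0 := norm_pos_iff.1 (hk.trans_le (im_le_norm_sub_ofReal k t))
  have hinv (s : ℝ) : IntervalIntegrable (fun t : ℝ => (k - t)⁻¹) volume (-s) s :=
    ((continuous_const.sub Complex.continuous_ofReal).inv₀ hkt).intervalIntegrable _ _
  have hF (j : ℕ) (s : ℝ) :
      IntervalIntegrable (fun t => (expansionRemainder h I j t : ℂ)) volume (-s) s :=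
    IntegrableOn.intervalIntegrable
      ((locallyIntegrable hh j).integrableOn_isCompact isCompact_uIcc).ofReal
  have hsplit (s : ℝ) : ∫ t in (-s)..s, (h t : ℂ) / (k - t) =
      ∑ j ∈ Finset.range n, ((∫ t in (-s)..s, expansionRemainder h I j t : ℝ)
        + I j * ∫ t in (-s)..s, (k - t)⁻¹) / k ^ (j + 1)
      + (∫ t in (-s)..s, (expansionRemainder h I n t : ℂ) / (k - t)) / k ^ n := by
    rw [intervalIntegral.integral_congr_ae (g := fun t => ∑ j ∈ Finset.range n,
        ((expansionRemainder h I j t : ℂ) + I j * (k - t)⁻¹) / k ^ (j + 1)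
      + (expansionRemainder h I n t : ℂ) / (k - t) / k ^ n) ?_]
    · rw [intervalIntegral.integral_add, intervalIntegral.integral_finsetSum,
        intervalIntegral.integral_div]
      · congr 1
        refine Finset.sum_congr rfl fun j _ => ?_
        rw [intervalIntegral.integral_div, intervalIntegral.integral_add (hF j s)
          ((hinv s).const_mul _), intervalIntegral.integral_const_mul,
          intervalIntegral.integral_ofReal]
      · exact fun j _ => ((hF j s).add ((hinv s).const_mul _)).div_const _
      · simpa only [Finset.sum_fn] using IntervalIntegrable.sum _ fun j _ =>
          ((hF j s).add ((hinv s).const_mul (I j : ℂ))).div_const (k ^ (j + 1))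
      · exact hn.intervalIntegrable.div_const _
    · filter_upwards [Measure.ae_ne volume 0] with t ht _
      exact ofReal_div_sub_eq hk0 ht (hkt t) n
  refine Tendsto.congr (fun s => (hsplit s).symm) ((tendsto_finsetSum _ fun j hj => ?_).add
    ((intervalIntegral_tendsto_integral hn tendsto_neg_atTop_atBot tendsto_id).div_const _))
  rw [show (J j : ℂ) - π * Complex.I * I j = J j + I j * (-π * Complex.I) by ring]
  exact (((Complex.continuous_ofReal.tendsto _).comp (hJ j (Finset.mem_range.1 hj))).add
    ((tendsto_intervalIntegral_inv_sub_ofReal hk).const_mul (I j : ℂ))).div_const (k ^ (j + 1))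

end expansionRemainder

theorem stmt_19_general (m : ℕ) (h : ℝ → ℝ) (hloc : LocallyIntegrable h volume)
    (Iseq : ℕ → ℝ)
    (hm : ℝ → ℝ)
    (hhm : ∀ t : ℝ, hm t =
      t ^ (m + 1) * (h t - ∑ i ∈ Finset.range (m + 1), Iseq i / t ^ (i + 1)))
    (a : ℝ) (ha : a < 1)
    (hint : Integrable (fun t : ℝ => |hm t| * (1 + |t|) ^ (-a))) :
    ∃ 𝒥 : ℕ → ℝ,
      (∀ j ≤ m, Tendsto
        (fun s : ℝ => (1 / π) * ∫ t in (-s)..s,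
          t ^ j * (h t - ∑ i ∈ Finset.range j, Iseq i / t ^ (i + 1)))
        atTop (nhds (𝒥 j))) ∧
      (∀ k : ℂ, 0 < k.im →
        Integrable (fun t : ℝ => ((hm t : ℝ) : ℂ) / (k - (t : ℂ))) ∧
        Tendsto (fun s : ℝ => (1 / (π : ℂ)) * ∫ t in (-s)..s, ((h t : ℝ) : ℂ) / (k - (t : ℂ)))
          atTop
          (nhds (∑ j ∈ Finset.range (m + 1),
              ((𝒥 j : ℂ) - Complex.I * (Iseq j : ℂ)) / k ^ (j + 1)
            + ((1 / (π : ℂ)) * ∫ t : ℝ, ((hm t : ℝ) : ℂ) / (k - (t : ℂ))) / k ^ (m + 1)))) ∧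
      Tendsto (fun τ : ℝ =>
          (1 / (π : ℂ)) * ∫ t : ℝ, ((hm t : ℝ) : ℂ) / (Complex.I * (τ : ℂ) - (t : ℂ)))
        atTop (nhds 0) := by
  set F := expansionRemainder h Iseq
  obtain rfl : hm = F (m + 1) := funext hhm
  have hFloc := expansionRemainder.locallyIntegrable (I := Iseq) hloc
  have hmeas := (hFloc (m + 1)).aestronglyMeasurable
  have hw := integrable_mul_inv_one_add_abs hmeas ha.le hint
  have hJ (j : ℕ) (hj : j ≤ m) : ∃ J, Tendsto (fun s => ∫ t in (-s)..s, F j t) atTop (𝓝 J) :=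
    exists_tendsto_intervalIntegral_neg_self_s19 (hFloc j) (fun t ht => expansionRemainder.succ j ht)
      (expansionRemainder.integrableOn_div (m + 1)
        (integrableOn_div_of_integrable_mul_inv_one_add_abs hmeas hw) (by omega))
  choose! J hJ using hJ
  refine ⟨fun j => 1 / π * J j, fun j hj => (hJ j hj).const_mul _, fun k hk =>
    ⟨integrable_ofReal_div_sub hmeas hw hk, ?_⟩,
    by simpa using (tendsto_integral_ofReal_div_I_mul_sub hmeas hw).const_mul (1 / (π : ℂ))⟩
  convert (expansionRemainder.tendsto_intervalIntegral_ofReal_div_sub hloc hk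
    (fun j hj => hJ j (by omega)) (integrable_ofReal_div_sub hmeas hw hk)).const_mul
    (1 / (π : ℂ)) using 2
  rw [mul_add, Finset.mul_sum, mul_div_assoc]
  congr 1
  refine Finset.sum_congr rfl fun j _ => ?_
  push_cast
  field_simp

/-- (Lemma 4.2 of the paper, general `m`.) Let `h : ℝ → ℝ` be locally
integrable and `I₀, …, I_m ∈ ℝ` (here `Iseq i = I_i`). With
`P_j(t) = ∑_{i=0}^{j} I_i/t^{i+1}` and `h_j(t) = t^{j+1}(h(t) − P_j(t))`, `h_{−1} = h`
(so `h_{j−1}(t) = t^j (h(t) − ∑_{i<j} I_i/t^{i+1})` for `0 ≤ j ≤ m`), assume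
`h_m(t) → 0` as `t → ±∞` and `∫ |h_m(t)|(1+|t|)^{−a} dt < ∞` for some `a < 1`. Then:
(1) each principal value `𝒥_j = lim_{s→∞}(1/π)∫_{−s}^s h_{j−1}` exists, `0 ≤ j ≤ m`;
(2) for `Im k > 0` the principal value `M(k) = lim_{s→∞}(1/π)∫_{−s}^s h(t)/(k−t) dt`
exists and equals `∑_{j=0}^m (𝒥_j − iI_j)/k^{j+1} + M_m(k)/k^{m+1}`, where
`M_m(k) = (1/π)∫ h_m(t)/(k−t) dt` converges absolutely; (3) `M_m(iτ) → 0` as `τ → +∞`. -/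
theorem stmt_19 (m : ℕ) (h : ℝ → ℝ) (hloc : LocallyIntegrable h volume)
    (Iseq : ℕ → ℝ)
    (hm : ℝ → ℝ)
    (hhm : ∀ t : ℝ, hm t =
      t ^ (m + 1) * (h t - ∑ i ∈ Finset.range (m + 1), Iseq i / t ^ (i + 1)))
    (htop : Tendsto hm atTop (nhds 0)) (hbot : Tendsto hm atBot (nhds 0))
    (a : ℝ) (ha : a < 1)
    (hint : Integrable (fun t : ℝ => |hm t| * (1 + |t|) ^ (-a))) :
    ∃ 𝒥 : ℕ → ℝ,
      (∀ j ≤ m, Tendsto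
        (fun s : ℝ => (1 / π) * ∫ t in (-s)..s,
          t ^ j * (h t - ∑ i ∈ Finset.range j, Iseq i / t ^ (i + 1)))
        atTop (nhds (𝒥 j))) ∧
      (∀ k : ℂ, 0 < k.im →
        Integrable (fun t : ℝ => ((hm t : ℝ) : ℂ) / (k - (t : ℂ))) ∧
        Tendsto (fun s : ℝ => (1 / (π : ℂ)) * ∫ t in (-s)..s, ((h t : ℝ) : ℂ) / (k - (t : ℂ)))
          atTop
          (nhds (∑ j ∈ Finset.range (m + 1),
              ((𝒥 j : ℂ) - Complex.I * (Iseq j : ℂ)) / k ^ (j + 1)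
            + ((1 / (π : ℂ)) * ∫ t : ℝ, ((hm t : ℝ) : ℂ) / (k - (t : ℂ))) / k ^ (m + 1)))) ∧
      Tendsto (fun τ : ℝ =>
          (1 / (π : ℂ)) * ∫ t : ℝ, ((hm t : ℝ) : ℂ) / (Complex.I * (τ : ℂ) - (t : ℂ)))
        atTop (nhds 0) :=
  stmt_19_general m h hloc Iseq hm hhm a ha hint
end
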